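/- arXiv:2305.10803 — 2 statements merged into one kernel-verified Lean document; each statement's English description precedes it below -/
import Mathlib

section
/- Let A be an n×n complex matrix with singular value decomposition A = UΣV*, where U = [U₁,U₂], V = [V₁,V₂] with U₂,V₂ ∈ ℂ^{n×κ} spanning the cokernel and kernel of A (i.e., the last κ singular values are zero). For any matrix M ∈ ℂ^{n×n} and the operator 𝒜 = A + M·V₂·V₂*, one has U*·𝒜·V = [[Σ₁, U₁*·M·V₂],[0, U₂*·M·V₂]], where Σ₁ is the diagonal matrix of the first n−κ singular values. Consequently 𝒜 is invertible if and only if U₂*·M·V₂ ∈ ℂ^{κ×κ} is invertible. -/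
open Matrix

lemma conj_isUnit_iff {l m : Type*} [Fintype l] [Fintype m] [DecidableEq l] [DecidableEq m]
    (U V : Matrix l m ℂ) (hU1 : U * Uᴴ = 1) (hU2 : Uᴴ * U = 1)
    (hV1 : V * Vᴴ = 1) (hV2 : Vᴴ * V = 1) (X : Matrix l l ℂ) :
    IsUnit X ↔ IsUnit (Uᴴ * X * V) := by
  constructor
  · rintro ⟨u, rfl⟩
    refine ⟨⟨Uᴴ * (↑u : Matrix l l ℂ) * V, Vᴴ * (↑u⁻¹ : Matrix l l ℂ) * U, ?_, ?_⟩, rfl⟩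
    · calc Uᴴ * (↑u : Matrix l l ℂ) * V * (Vᴴ * (↑u⁻¹ : Matrix l l ℂ) * U)
          = Uᴴ * (↑u * (V * Vᴴ) * (↑u⁻¹ : Matrix l l ℂ)) * U := by
            simp only [Matrix.mul_assoc]
        _ = Uᴴ * ((↑u : Matrix l l ℂ) * ↑u⁻¹) * U := by rw [hV1, mul_one]
        _ = 1 := by rw [u.mul_inv, Matrix.mul_one, hU2]
    · calc Vᴴ * (↑u⁻¹ : Matrix l l ℂ) * U * (Uᴴ * (↑u : Matrix l l ℂ) * V)
          = Vᴴ * ((↑u⁻¹ : Matrix l l ℂ) * (U * Uᴴ) * ↑u) * V := by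
            simp only [Matrix.mul_assoc]
        _ = Vᴴ * ((↑u⁻¹ : Matrix l l ℂ) * ↑u) * V := by rw [hU1, mul_one]
        _ = 1 := by rw [u.inv_mul, Matrix.mul_one, hV2]
  · rintro ⟨u, hu⟩
    refine ⟨⟨X, V * (↑u⁻¹ : Matrix m m ℂ) * Uᴴ, ?_, ?_⟩, rfl⟩
    · calc X * (V * (↑u⁻¹ : Matrix m m ℂ) * Uᴴ)
          = (U * Uᴴ) * (X * (V * (↑u⁻¹ : Matrix m m ℂ) * Uᴴ)) := by rw [hU1, one_mul]
        _ = U * ((Uᴴ * X * V) * (↑u⁻¹ : Matrix m m ℂ)) * Uᴴ := by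
            simp only [Matrix.mul_assoc]
        _ = 1 := by rw [← hu, u.mul_inv, Matrix.mul_one, hU1]
    · calc (V * (↑u⁻¹ : Matrix m m ℂ) * Uᴴ) * X
          = (V * (↑u⁻¹ : Matrix m m ℂ) * Uᴴ) * X * (V * Vᴴ) := by rw [hV1, mul_one]
        _ = V * ((↑u⁻¹ : Matrix m m ℂ) * (Uᴴ * X * V)) * Vᴴ := by
            simp only [Matrix.mul_assoc]
        _ = 1 := by rw [← hu, u.inv_mul, Matrix.mul_one, hV1]

/-- Theorem 3 of the paper: with SVD `A = U Σ Vᴴ` where the last `κ` singular values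
vanish, for any `M` the operator `𝒜 = A + M V₂ V₂ᴴ` satisfies
`Uᴴ 𝒜 V = [[Σ₁, U₁ᴴMV₂],[0, U₂ᴴMV₂]]`, and `𝒜` is invertible iff `U₂ᴴMV₂` is. -/
theorem stmt0 (n κ : ℕ)
    (U₁ V₁ : Matrix (Fin n) (Fin (n - κ)) ℂ)
    (U₂ V₂ : Matrix (Fin n) (Fin κ) ℂ)
    (σ : Fin (n - κ) → ℝ) (hσpos : ∀ i, 0 < σ i)
    (hσmono : ∀ i j : Fin (n - κ), i ≤ j → σ j ≤ σ i)
    (hU₁ : fromCols U₁ U₂ * (fromCols U₁ U₂)ᴴ = 1)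
    (hU₂ : (fromCols U₁ U₂)ᴴ * fromCols U₁ U₂ = 1)
    (hV₁ : fromCols V₁ V₂ * (fromCols V₁ V₂)ᴴ = 1)
    (hV₂ : (fromCols V₁ V₂)ᴴ * fromCols V₁ V₂ = 1)
    (A : Matrix (Fin n) (Fin n) ℂ)
    (hA : A = fromCols U₁ U₂ *
      (fromBlocks (diagonal fun i => (σ i : ℂ)) 0 0 0 :
        Matrix (Fin (n - κ) ⊕ Fin κ) (Fin (n - κ) ⊕ Fin κ) ℂ) * (fromCols V₁ V₂)ᴴ)
    (M : Matrix (Fin n) (Fin n) ℂ) :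
    (fromCols U₁ U₂)ᴴ * (A + M * V₂ * V₂ᴴ) * fromCols V₁ V₂ =
      fromBlocks (diagonal fun i => (σ i : ℂ)) (U₁ᴴ * M * V₂) 0 (U₂ᴴ * M * V₂) ∧
    (IsUnit (A + M * V₂ * V₂ᴴ) ↔ IsUnit (U₂ᴴ * M * V₂)) := by
  set U := fromCols U₁ U₂ with hU
  set V := fromCols V₁ V₂ with hV
  have hVblocks : fromBlocks (V₁ᴴ * V₁) (V₁ᴴ * V₂) (V₂ᴴ * V₁) (V₂ᴴ * V₂)
      = fromBlocks 1 0 0 1 := by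
    rw [← fromRows_mul_fromCols, ← conjTranspose_fromCols_eq_fromRows_conjTranspose,
      ← hV, hV₂, fromBlocks_one]
  have hV21 : V₂ᴴ * V₁ = 0 := (fromBlocks_inj.mp hVblocks).2.2.1
  have hV22 : V₂ᴴ * V₂ = 1 := (fromBlocks_inj.mp hVblocks).2.2.2
  have hUAV : Uᴴ * A * V = fromBlocks (diagonal fun i => (σ i : ℂ)) 0 0 0 := by
    rw [hA]
    calc Uᴴ * (U * (fromBlocks (diagonal fun i => (σ i : ℂ)) 0 0 0 : Matrix (Fin (n - κ) ⊕ Fin κ) (Fin (n - κ) ⊕ Fin κ) ℂ) * Vᴴ) * V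
        = (Uᴴ * U) * ((fromBlocks (diagonal fun i => (σ i : ℂ)) 0 0 0 : Matrix (Fin (n - κ) ⊕ Fin κ) (Fin (n - κ) ⊕ Fin κ) ℂ) * (Vᴴ * V)) := by
          simp only [Matrix.mul_assoc]
      _ = _ := by rw [hU₂, hV₂, one_mul, mul_one]
  have hmid : V₂ᴴ * V = fromCols 0 1 := by
    rw [hV, mul_fromCols, hV21, hV22]
  have hUMV : Uᴴ * (M * V₂ * V₂ᴴ) * V
      = fromBlocks 0 (U₁ᴴ * M * V₂) 0 (U₂ᴴ * M * V₂) := by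
    calc Uᴴ * (M * V₂ * V₂ᴴ) * V = (Uᴴ * (M * V₂)) * (V₂ᴴ * V) := by
          simp only [Matrix.mul_assoc]
      _ = fromRows (U₁ᴴ * (M * V₂)) (U₂ᴴ * (M * V₂)) * (fromCols 0 1 : Matrix (Fin κ) (Fin (n - κ) ⊕ Fin κ) ℂ) := by
          rw [hmid, hU, conjTranspose_fromCols_eq_fromRows_conjTranspose,
            fromRows_mul]
      _ = fromBlocks 0 (U₁ᴴ * M * V₂) 0 (U₂ᴴ * M * V₂) := by
          rw [fromRows_mul_fromCols]
          simp [Matrix.mul_assoc]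
  have key : Uᴴ * (A + M * V₂ * V₂ᴴ) * V =
      fromBlocks (diagonal fun i => (σ i : ℂ)) (U₁ᴴ * M * V₂) 0 (U₂ᴴ * M * V₂) := by
    rw [Matrix.mul_add, Matrix.add_mul, hUAV, hUMV, fromBlocks_add]
    congr 1 <;> simp
  refine ⟨key, ?_⟩
  have hdiag : IsUnit (diagonal fun i : Fin (n - κ) => (σ i : ℂ)).det := by
    rw [det_diagonal]
    exact isUnit_iff_ne_zero.mpr (Finset.prod_ne_zero_iff.mpr fun i _ => by
      exact_mod_cast (hσpos i).ne')
  rw [conj_isUnit_iff U V hU₁ hU₂ hV₁ hV₂, key, Matrix.isUnit_iff_isUnit_det,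
    det_fromBlocks_zero₂₁, IsUnit.mul_iff, and_iff_right hdiag,
    ← Matrix.isUnit_iff_isUnit_det]
end

section
/- Let Df(ξ) ∈ ℂ^{n×n} be a matrix with kernel of dimension κ > 0, let V₂ ∈ ℂ^{n×κ} have columns forming an orthonormal basis of ker Df(ξ), and let V₁ ∈ ℂ^{n×(n−κ)} have columns forming an orthonormal basis of (ker Df(ξ))^⊥. For H the n×n×n tensor of second derivatives and λ₂ ∈ ℂ^κ, set v = V₂·λ₂, and define the (2n)×(2n−κ) matrix M = [[Df(ξ), 0],[H·v, Df(ξ)·V₁]] (acting on vectors (V₂w₁ stacked with w₂)). Then M has full column rank if and only if the linear operator 𝒜 = Df(ξ) + (H·v)·V₂·V₂* : ℂⁿ → ℂⁿ is invertible. -/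
open Matrix

/-- Theorem 2 of the paper (abstract form): the `2n × (2n-κ)` deflation matrix
`M = [[Df, 0],[H·v, Df·V₁]]` has full column rank (on vectors `[V₂w₁; w₂]`)
iff the operator `𝒜 = Df + (H·v)·V₂·V₂ᴴ` is invertible. -/
theorem stmt2 (n κ : ℕ) (hκ : 0 < κ)
    (Df : Matrix (Fin n) (Fin n) ℂ)
    (V₁ : Matrix (Fin n) (Fin (n - κ)) ℂ)
    (V₂ : Matrix (Fin n) (Fin κ) ℂ)
    (hV₁ : fromCols V₁ V₂ * (fromCols V₁ V₂)ᴴ = 1)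
    (hV₂ : (fromCols V₁ V₂)ᴴ * fromCols V₁ V₂ = 1)
    (hker : ∀ w : Fin n → ℂ, Df *ᵥ w = 0 ↔ ∃ z : Fin κ → ℂ, w = V₂ *ᵥ z)
    (Hv : Matrix (Fin n) (Fin n) ℂ) :
    (∀ (w₁ : Fin κ → ℂ) (w₂ : Fin (n - κ) → ℂ),
        (fromBlocks Df 0 Hv (Df * V₁)) *ᵥ (Sum.elim (V₂ *ᵥ w₁) w₂) = 0 →
        w₁ = 0 ∧ w₂ = 0) ↔
      IsUnit (Df + Hv * V₂ * V₂ᴴ) := by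
  -- unpack the orthonormality relations
  rw [conjTranspose_fromCols_eq_fromRows_conjTranspose, fromRows_mul_fromCols,
    ← fromBlocks_one, fromBlocks_inj] at hV₂
  obtain ⟨h11, h12, h21, h22⟩ := hV₂
  rw [conjTranspose_fromCols_eq_fromRows_conjTranspose, fromCols_mul_fromRows] at hV₁
  -- Df * V₂ = 0
  have hDfV₂ : Df * V₂ = 0 := by
    ext i j
    have h := (hker (V₂ *ᵥ Pi.single j 1)).mpr ⟨Pi.single j 1, rfl⟩
    rw [mulVec_mulVec] at h
    simpa [mulVec_single] using congrFun h i
  constructor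
  · intro hfull
    rw [Matrix.isUnit_iff_isUnit_det]
    by_contra hdet
    have hdet0 : (Df + Hv * V₂ * V₂ᴴ).det = 0 := by
      by_contra h; exact hdet (isUnit_iff_ne_zero.mpr h)
    obtain ⟨v, hv0, hv⟩ := (Matrix.exists_mulVec_eq_zero_iff).mpr hdet0
    set w₁ := V₂ᴴ *ᵥ v with hw₁
    set w₂ := V₁ᴴ *ᵥ v with hw₂
    have hDfv : Df *ᵥ v = (Df * V₁) *ᵥ w₂ := by
      conv_lhs => rw [show Df = Df * (V₁ * V₁ᴴ + V₂ * V₂ᴴ) by rw [hV₁, Matrix.mul_one]]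
      rw [Matrix.mul_add, add_mulVec, ← Matrix.mul_assoc, ← Matrix.mul_assoc, hDfV₂,
        Matrix.zero_mul, zero_mulVec, add_zero, hw₂]
      simp only [mulVec_mulVec, Matrix.mul_assoc]
    have key : Hv *ᵥ (V₂ *ᵥ w₁) + (Df * V₁) *ᵥ w₂ = 0 := by
      have e : (Df + Hv * V₂ * V₂ᴴ) *ᵥ v = (Df * V₁) *ᵥ w₂ + Hv *ᵥ (V₂ *ᵥ w₁) := by
        rw [add_mulVec, hDfv, hw₁]
        simp only [mulVec_mulVec, Matrix.mul_assoc]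
      rw [add_comm, ← e, hv]
    have hww := hfull w₁ w₂ ?_
    · obtain ⟨h1, h2⟩ := hww
      apply hv0
      have hvv : (V₁ * V₁ᴴ + V₂ * V₂ᴴ) *ᵥ v = v := by rw [hV₁, one_mulVec]
      calc v = (V₁ * V₁ᴴ + V₂ * V₂ᴴ) *ᵥ v := hvv.symm
        _ = V₁ *ᵥ w₂ + V₂ *ᵥ w₁ := by
            rw [add_mulVec, hw₁, hw₂]; simp only [mulVec_mulVec, Matrix.mul_assoc]
        _ = 0 := by rw [h1, h2, mulVec_zero, mulVec_zero, add_zero]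
    · rw [fromBlocks_mulVec]
      ext (i | i)
      · simp [mulVec_mulVec, hDfV₂]
      · simpa using congrFun key i
  · intro hA w₁ w₂ hM
    rw [fromBlocks_mulVec] at hM
    have hbot : Hv *ᵥ (V₂ *ᵥ w₁) + (Df * V₁) *ᵥ w₂ = 0 := by
      ext i; simpa using congrFun hM (Sum.inr i)
    set v := V₁ *ᵥ w₂ + V₂ *ᵥ w₁ with hv
    have hV₂v : V₂ᴴ *ᵥ v = w₁ := by
      rw [hv, mulVec_add]
      simp only [mulVec_mulVec, h21, h22, zero_mulVec, one_mulVec, zero_add]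
    have hV₁v : V₁ᴴ *ᵥ v = w₂ := by
      rw [hv, mulVec_add]
      simp only [mulVec_mulVec, h11, h12, zero_mulVec, one_mulVec, add_zero]
    have hAv : (Df + Hv * V₂ * V₂ᴴ) *ᵥ v = 0 := by
      have hDfv : Df *ᵥ v = (Df * V₁) *ᵥ w₂ := by
        rw [hv, mulVec_add]
        simp only [mulVec_mulVec, hDfV₂, zero_mulVec, add_zero]
      have h2 : (Hv * V₂ * V₂ᴴ) *ᵥ v = Hv *ᵥ (V₂ *ᵥ w₁) := by
        rw [← hV₂v]
        simp only [mulVec_mulVec, Matrix.mul_assoc]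
      rw [add_mulVec, hDfv, h2, add_comm]
      exact hbot
    have hv0 : v = 0 := by
      obtain ⟨u, hu⟩ := hA
      have h3 : (↑u⁻¹ : Matrix (Fin n) (Fin n) ℂ) *ᵥ ((Df + Hv * V₂ * V₂ᴴ) *ᵥ v) = v := by
        rw [mulVec_mulVec, ← hu]
        change ((↑u⁻¹ : Matrix (Fin n) (Fin n) ℂ) * (↑u : Matrix (Fin n) (Fin n) ℂ)) *ᵥ v = v
        rw [u.inv_mul]
        exact one_mulVec v
      rw [hAv, mulVec_zero] at h3
      exact h3.symm
    exact ⟨by rw [← hV₂v, hv0, mulVec_zero], by rw [← hV₁v, hv0, mulVec_zero]⟩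
end
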